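/- arXiv:1801.07030 — 6 statements merged into one kernel-verified Lean document; each statement's English description precedes it below -/
import Mathlib

section
/- Let (Ω, 𝓕, μₚ) be a probability space, W : Ω → ℝ a nonnegative measurable function with ∫ W dμₚ = 1, μₜ = μₚ.withDensity W, and let R : Ω → ℝ be measurable with 0 ≤ R ≤ r_max and W·R integrable with respect to μₚ. Fix a capping level c > 0 and set the max-capped weight W̄ = min(W, c). Then the expected reward under the test policy decomposes as ∫ R dμₜ = ∫ W̄ · R dμₚ + ∫ (W − W̄) · R dμₚ, and the second (bias) term can be rewritten under the test measure as ∫ (W − W̄) · R dμₚ = ∫_{ {ω : W ω > c} } (1 − c / W(ω)) · R(ω) dμₜ(ω). -/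
/-!
Since `μₜ = W • μₚ`, every `μₜ`-integral is the `μₚ`-integral of `W` times the integrand.
The capped term is integrable because `0 ≤ min W c ≤ W`, and the bias integrand
`(W - min W c) R` vanishes off `{W > c}`, where it equals `W (1 - c / W) R`.
-/

open MeasureTheory

namespace MeasureTheory

variable {Ω : Type*} [MeasurableSpace Ω] {μ : Measure Ω}

theorem integral_withDensity_ofReal_eq_integral_smul {E : Type*} [NormedAddCommGroup E]
    [NormedSpace ℝ E] {W : Ω → ℝ} (hW_meas : Measurable W) (hW_nonneg : ∀ᵐ ω ∂μ, 0 ≤ W ω)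
    (g : Ω → E) :
    ∫ ω, g ω ∂μ.withDensity (fun ω => ENNReal.ofReal (W ω)) = ∫ ω, W ω • g ω ∂μ := by
  rw [integral_withDensity_eq_integral_toReal_smul hW_meas.ennreal_ofReal
    (ae_of_all _ fun _ => ENNReal.ofReal_lt_top)]
  refine integral_congr_ae ?_
  filter_upwards [hW_nonneg] with ω hω
  rw [ENNReal.toReal_ofReal hω]

theorem Integrable.min_const_mul {W R : Ω → ℝ} {c : ℝ}
    (hWR_int : Integrable (fun ω => W ω * R ω) μ) (hW : AEStronglyMeasurable W μ)
    (hR : AEStronglyMeasurable R μ) (hW_nonneg : ∀ᵐ ω ∂μ, 0 ≤ W ω) (hc : 0 ≤ c) :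
    Integrable (fun ω => min (W ω) c * R ω) μ := by
  refine hWR_int.mono ((hW.inf aestronglyMeasurable_const).mul hR) ?_
  filter_upwards [hW_nonneg] with ω hω
  rw [norm_mul, norm_mul]
  gcongr
  rw [Real.norm_of_nonneg (le_min hω hc), Real.norm_of_nonneg hω]
  exact min_le_left _ _

end MeasureTheory

theorem sub_min_mul_eq_mul_indicator {Ω : Type*} {W R : Ω → ℝ} {c : ℝ} (hc : 0 ≤ c) (ω : Ω) :
    (W ω - min (W ω) c) * R ω
      = W ω * {ω | W ω > c}.indicator (fun ω => (1 - c / W ω) * R ω) ω := by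
  by_cases h : c < W ω
  · have hW_ne : W ω ≠ 0 := (hc.trans_lt h).ne'
    rw [Set.indicator_of_mem (show ω ∈ {ω | W ω > c} from h), min_eq_right h.le]
    field_simp
  · rw [Set.indicator_of_notMem (show ω ∉ {ω | W ω > c} from h), min_eq_left (not_lt.mp h)]
    ring

theorem cis_bias_decomposition_general
    {Ω : Type*} [MeasurableSpace Ω] (μₚ : Measure Ω)
    (W : Ω → ℝ) (hW_meas : Measurable W) (hW_nonneg : ∀ ω, 0 ≤ W ω)
    (μₜ : Measure Ω) (hμₜ : μₜ = μₚ.withDensity (fun ω => ENNReal.ofReal (W ω)))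
    (R : Ω → ℝ) (hR_meas : Measurable R)
    (hWR_int : Integrable (fun ω => W ω * R ω) μₚ)
    (c : ℝ) (hc : 0 < c) :
    (∫ ω, R ω ∂μₜ
        = ∫ ω, min (W ω) c * R ω ∂μₚ + ∫ ω, (W ω - min (W ω) c) * R ω ∂μₚ) ∧
    (∫ ω, (W ω - min (W ω) c) * R ω ∂μₚ
        = ∫ ω in {ω | W ω > c}, (1 - c / W ω) * R ω ∂μₜ) := by
  have change_of_measure (g : Ω → ℝ) : ∫ ω, g ω ∂μₜ = ∫ ω, W ω * g ω ∂μₚ := by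
    rw [hμₜ, integral_withDensity_ofReal_eq_integral_smul hW_meas (ae_of_all _ hW_nonneg)]
    rfl
  have hmin_int : Integrable (fun ω => min (W ω) c * R ω) μₚ :=
    hWR_int.min_const_mul hW_meas.aestronglyMeasurable hR_meas.aestronglyMeasurable
      (ae_of_all _ hW_nonneg) hc.le
  have hbias_int : Integrable (fun ω => (W ω - min (W ω) c) * R ω) μₚ := by
    simp_rw [sub_mul]
    exact hWR_int.sub hmin_int
  refine ⟨?_, ?_⟩
  · rw [change_of_measure, ← integral_add hmin_int hbias_int]
    congr with ω
    ring
  · rw [← integral_indicator (measurableSet_lt measurable_const hW_meas), change_of_measure]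
    simp_rw [sub_min_mul_eq_mul_indicator hc.le]

/-- Decomposition of the expected reward under the test policy into the max-capped
capped importance sampling term and the bias term, together with the rewriting of the bias
term under the test measure:
`∫ R dμₜ = ∫ min(W,c)·R dμₚ + ∫ (W − min(W,c))·R dμₚ` and
`∫ (W − min(W,c))·R dμₚ = ∫_{W > c} (1 − c/W)·R dμₜ`. -/
theorem cis_bias_decomposition
    {Ω : Type*} [MeasurableSpace Ω] (μₚ : Measure Ω) [IsProbabilityMeasure μₚ]
    (W : Ω → ℝ) (hW_meas : Measurable W) (hW_nonneg : ∀ ω, 0 ≤ W ω)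
    (hW_int : ∫ ω, W ω ∂μₚ = 1)
    (μₜ : Measure Ω) (hμₜ : μₜ = μₚ.withDensity (fun ω => ENNReal.ofReal (W ω)))
    (R : Ω → ℝ) (hR_meas : Measurable R)
    (r_max : ℝ) (hR_nonneg : ∀ ω, 0 ≤ R ω) (hR_le : ∀ ω, R ω ≤ r_max)
    (hWR_int : Integrable (fun ω => W ω * R ω) μₚ)
    (c : ℝ) (hc : 0 < c) :
    (∫ ω, R ω ∂μₜ
        = ∫ ω, min (W ω) c * R ω ∂μₚ + ∫ ω, (W ω - min (W ω) c) * R ω ∂μₚ) ∧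
    (∫ ω, (W ω - min (W ω) c) * R ω ∂μₚ
        = ∫ ω in {ω | W ω > c}, (1 - c / W ω) * R ω ∂μₜ) :=
  cis_bias_decomposition_general μₚ W hW_meas hW_nonneg μₜ hμₜ R hR_meas hWR_int c hc
end

section
/- Let (Ω, 𝓕, μₚ) be a probability space, W : Ω → ℝ a nonnegative measurable function with ∫ W dμₚ = 1, μₜ = μₚ.withDensity W, and let R : Ω → ℝ be measurable with 0 ≤ R ≤ r_max and W·R integrable with respect to μₚ. Fix c > 0 and set W̄ = min(W, c). Then the bias of max-capped importance sampling satisfies the worst-case bounds 0 ≤ ∫ R dμₜ − ∫ W̄ · R dμₚ ≤ r_max · μₜ({ω : W ω > c}). In particular the capped estimator always underestimates the true expected reward. -/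
open MeasureTheory

/-!
Under `μₜ = W · μₚ` the true value is `∫ W R dμₚ`, so the bias of the capped estimator is
`∫ (W - min W c) R dμₚ`. Its integrand is nonnegative, vanishes off `{W > c}`, and on that set it is
at most `r_max · W`, whose `μₚ`-integral over `{W > c}` is `r_max · μₜ {W > c}`.
-/

section WithDensity

variable {Ω : Type*} [MeasurableSpace Ω] {μ : Measure Ω} {f : Ω → ℝ}

theorem integral_withDensity_ofReal (hf : AEMeasurable f μ) (hf0 : 0 ≤ᵐ[μ] f) (g : Ω → ℝ) :
    ∫ x, g x ∂μ.withDensity (fun x => ENNReal.ofReal (f x)) = ∫ x, f x * g x ∂μ := by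
  rw [integral_withDensity_eq_integral_toReal_smul₀ hf.ennreal_ofReal
    (ae_of_all _ fun _ => ENNReal.ofReal_lt_top)]
  refine integral_congr_ae ?_
  filter_upwards [hf0] with x hx
  simp [ENNReal.toReal_ofReal hx]

theorem measureReal_withDensity_ofReal (hf : AEMeasurable f μ) (hf0 : 0 ≤ᵐ[μ] f)
    {s : Set Ω} (hs : MeasurableSet s) :
    (μ.withDensity (fun x => ENNReal.ofReal (f x))).real s = ∫ x in s, f x ∂μ := by
  rw [← integral_indicator_one hs, integral_withDensity_ofReal hf hf0, ← integral_indicator hs]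
  congr 1 with x
  by_cases hx : x ∈ s <;> simp [hx]

end WithDensity

theorem MeasureTheory.Integrable.min_const_mul_s2 {Ω : Type*} [MeasurableSpace Ω] {μ : Measure Ω}
    {W R : Ω → ℝ} {c : ℝ} (hWR : Integrable (fun x => W x * R x) μ)
    (hm : AEStronglyMeasurable (fun x => min (W x) c * R x) μ) (hW0 : 0 ≤ᵐ[μ] W) (hc : 0 ≤ c) :
    Integrable (fun x => min (W x) c * R x) μ := by
  refine hWR.mono hm ?_
  filter_upwards [hW0] with x hx
  rw [norm_mul, norm_mul, Real.norm_of_nonneg (le_min hx hc), Real.norm_of_nonneg hx]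
  exact mul_le_mul_of_nonneg_right (min_le_left _ _) (norm_nonneg _)

theorem sub_min_mul_le_indicator {w c r M : ℝ} (hc : 0 ≤ c) (hr0 : 0 ≤ r) (hrM : r ≤ M) :
    (w - min w c) * r ≤ (Set.Ioi c).indicator (fun w => M * w) w := by
  by_cases hw : w ∈ Set.Ioi c
  · rw [Set.indicator_of_mem hw, min_eq_right (le_of_lt hw), mul_comm M]
    exact mul_le_mul (sub_le_self _ hc) hrM hr0 (hc.trans (le_of_lt hw))
  · rw [Set.indicator_of_notMem hw, min_eq_left (not_lt.1 hw), sub_self, zero_mul]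

theorem cis_bias_bounds_general
    {Ω : Type*} [MeasurableSpace Ω] (μₚ : Measure Ω)
    (W : Ω → ℝ) (hW_meas : Measurable W) (hW_nonneg : ∀ ω, 0 ≤ W ω)
    (hW_int : ∫ ω, W ω ∂μₚ = 1)
    (μₜ : Measure Ω) (hμₜ : μₜ = μₚ.withDensity (fun ω => ENNReal.ofReal (W ω)))
    (R : Ω → ℝ) (hR_meas : Measurable R)
    (r_max : ℝ) (hR_nonneg : ∀ ω, 0 ≤ R ω) (hR_le : ∀ ω, R ω ≤ r_max)
    (hWR_int : Integrable (fun ω => W ω * R ω) μₚ)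
    (c : ℝ) (hc : 0 < c) :
    0 ≤ ∫ ω, R ω ∂μₜ - ∫ ω, min (W ω) c * R ω ∂μₚ ∧
    ∫ ω, R ω ∂μₜ - ∫ ω, min (W ω) c * R ω ∂μₚ
      ≤ r_max * (μₜ {ω | W ω > c}).toReal := by
  have hW0 : 0 ≤ᵐ[μₚ] W := ae_of_all _ hW_nonneg
  have hW_intble : Integrable W μₚ := Integrable.of_integral_ne_zero (by simp [hW_int])
  have hmin : Integrable (fun ω => min (W ω) c * R ω) μₚ :=
    hWR_int.min_const_mul_s2 ((hW_meas.min measurable_const).mul hR_meas).aestronglyMeasurable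
      hW0 hc.le
  have hS : MeasurableSet {ω | W ω > c} := measurableSet_lt measurable_const hW_meas
  have hbias : ∫ ω, R ω ∂μₜ - ∫ ω, min (W ω) c * R ω ∂μₚ
      = ∫ ω, (W ω - min (W ω) c) * R ω ∂μₚ := by
    rw [hμₜ, integral_withDensity_ofReal hW_meas.aemeasurable hW0, ← integral_sub hWR_int hmin]
    simp only [sub_mul]
  rw [hbias, ← measureReal_def, hμₜ, measureReal_withDensity_ofReal hW_meas.aemeasurable hW0 hS,
    ← integral_const_mul, ← integral_indicator hS]
  refine ⟨integral_nonneg fun ω => mul_nonneg (sub_nonneg.2 (min_le_left _ _)) (hR_nonneg ω),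
    integral_mono ?_ ((hW_intble.const_mul r_max).indicator hS)
      fun ω => sub_min_mul_le_indicator hc.le (hR_nonneg ω) (hR_le ω)⟩
  simpa only [Pi.sub_def, sub_mul] using hWR_int.sub hmin

/-- Worst-case bounds on the bias of max-capped importance sampling:
`0 ≤ ∫ R dμₜ − ∫ min(W,c)·R dμₚ ≤ r_max · μₜ({W > c})`.
In particular the capped estimator always underestimates the true expected reward. -/
theorem cis_bias_bounds
    {Ω : Type*} [MeasurableSpace Ω] (μₚ : Measure Ω) [IsProbabilityMeasure μₚ]
    (W : Ω → ℝ) (hW_meas : Measurable W) (hW_nonneg : ∀ ω, 0 ≤ W ω)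
    (hW_int : ∫ ω, W ω ∂μₚ = 1)
    (μₜ : Measure Ω) (hμₜ : μₜ = μₚ.withDensity (fun ω => ENNReal.ofReal (W ω)))
    (R : Ω → ℝ) (hR_meas : Measurable R)
    (r_max : ℝ) (hR_nonneg : ∀ ω, 0 ≤ R ω) (hR_le : ∀ ω, R ω ≤ r_max)
    (hWR_int : Integrable (fun ω => W ω * R ω) μₚ)
    (c : ℝ) (hc : 0 < c) :
    0 ≤ ∫ ω, R ω ∂μₜ - ∫ ω, min (W ω) c * R ω ∂μₚ ∧
    ∫ ω, R ω ∂μₜ - ∫ ω, min (W ω) c * R ω ∂μₚ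
      ≤ r_max * (μₜ {ω | W ω > c}).toReal :=
  cis_bias_bounds_general μₚ W hW_meas hW_nonneg hW_int μₜ hμₜ R hR_meas r_max hR_nonneg hR_le
    hWR_int c hc
end

section
/- Let (Ω, 𝓕, μₚ) be a probability space, W : Ω → ℝ a nonnegative measurable function with ∫ W dμₚ = 1, and R : Ω → ℝ measurable and bounded. Fix c > 0 with ∫ min(W, c) dμₚ > 0. Let Z : ℕ → Ω' → Ω be an i.i.d. sequence of random variables on a probability space (Ω', μ') with common law μₚ. Then almost surely under μ', the normalised capped importance sampling ratio converges: (∑_{i < n} min(W(Z_i), c) · R(Z_i)) / (∑_{i < n} min(W(Z_i), c)) → (∫ min(W, c) · R dμₚ) / (∫ min(W, c) dμₚ) as n → ∞. (Asymptotic behaviour of the NCIS estimator with max-capping.) -/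
open MeasureTheory Filter ProbabilityTheory
open scoped Topology

/-! Both sums, divided by `n`, obey the strong law of large numbers: the capped weight is integrable
because the weight is (its integral is `1 ≠ 0`), and the capped weight times the bounded reward is
then integrable too. The ratio of the two empirical means converges to the ratio of the limits,
the denominator's limit being positive. -/

theorem tendsto_div_of_tendsto_div_natCast {a b : ℕ → ℝ} {A B : ℝ}
    (ha : Tendsto (fun n : ℕ => a n / n) atTop (𝓝 A))
    (hb : Tendsto (fun n : ℕ => b n / n) atTop (𝓝 B)) (hB : B ≠ 0) :
    Tendsto (fun n => a n / b n) atTop (𝓝 (A / B)) := by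
  refine (ha.div hb hB).congr' ?_
  filter_upwards [eventually_ge_atTop 1] with n hn
  exact div_div_div_cancel_right₀ (by positivity) _ _

theorem strong_law_ae_comp {Ω Ω' : Type*} [MeasurableSpace Ω] [MeasurableSpace Ω']
    {μ : Measure Ω} {μ' : Measure Ω'} {Z : ℕ → Ω' → Ω} (hZ : ∀ i, Measurable (Z i))
    (hindep : Pairwise fun i j => IndepFun (Z i) (Z j) μ') (hlaw : ∀ i, μ'.map (Z i) = μ)
    {h : Ω → ℝ} (hm : Measurable h) (hint : Integrable h μ) :
    ∀ᵐ ω ∂μ', Tendsto (fun n : ℕ => (∑ i ∈ Finset.range n, h (Z i ω)) / n) atTop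
      (𝓝 (∫ x, h x ∂μ)) := by
  have hident : ∀ i, IdentDistrib (Z i) (Z 0) μ' μ' := fun i =>
    ⟨(hZ i).aemeasurable, (hZ 0).aemeasurable, by rw [hlaw, hlaw]⟩
  have hint₀ : Integrable (h ∘ Z 0) μ' := by
    rw [← hlaw 0] at hint
    exact hint.comp_measurable (hZ 0)
  have hmean : ∫ ω, h (Z 0 ω) ∂μ' = ∫ x, h x ∂μ := by
    rw [← hlaw 0, integral_map (hZ 0).aemeasurable hm.aestronglyMeasurable]
  rw [← hmean]
  exact strong_law_ae_real (fun i => h ∘ Z i) hint₀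
    (fun i j hij => (hindep hij).comp hm hm) fun i => (hident i).comp hm

theorem ncis_asymptotic_general
    {Ω Ω' : Type*} [MeasurableSpace Ω] [MeasurableSpace Ω']
    (μₚ : Measure Ω) [IsProbabilityMeasure μₚ]
    (W : Ω → ℝ) (hW_meas : Measurable W)
    (hW_int : ∫ ω, W ω ∂μₚ = 1)
    (R : Ω → ℝ) (hR_meas : Measurable R) (C : ℝ) (hR_bdd : ∀ ω, |R ω| ≤ C)
    (c : ℝ) (hpos : 0 < ∫ ω, min (W ω) c ∂μₚ)
    (μ' : Measure Ω')
    (Z : ℕ → Ω' → Ω) (hZ_meas : ∀ i, Measurable (Z i))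
    (hZ_indep : ProbabilityTheory.iIndepFun Z μ')
    (hZ_law : ∀ i, Measure.map (Z i) μ' = μₚ) :
    ∀ᵐ ω' ∂μ', Tendsto
      (fun n : ℕ =>
        (∑ i ∈ Finset.range n, min (W (Z i ω')) c * R (Z i ω')) /
        (∑ i ∈ Finset.range n, min (W (Z i ω')) c))
      atTop
      (nhds ((∫ ω, min (W ω) c * R ω ∂μₚ) / (∫ ω, min (W ω) c ∂μₚ))) := by
  have hcap_meas : Measurable fun ω => min (W ω) c := hW_meas.min measurable_const
  have hcap_int : Integrable (fun ω => min (W ω) c) μₚ :=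
    (Integrable.of_integral_ne_zero (by rw [hW_int]; exact one_ne_zero)).inf
      (integrable_const c)
  have hcapR_int : Integrable (fun ω => min (W ω) c * R ω) μₚ :=
    hcap_int.mul_bdd hR_meas.aestronglyMeasurable (.of_forall hR_bdd)
  have hpair : Pairwise fun i j => IndepFun (Z i) (Z j) μ' := fun i j hij =>
    hZ_indep.indepFun hij
  filter_upwards [strong_law_ae_comp hZ_meas hpair hZ_law (hcap_meas.mul hR_meas) hcapR_int,
    strong_law_ae_comp hZ_meas hpair hZ_law hcap_meas hcap_int] with ω' hnum hden
  exact tendsto_div_of_tendsto_div_natCast hnum hden hpos.ne'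

/-- Asymptotic behaviour of the NCIS estimator with max-capping: along an i.i.d.
sequence with common law `μₚ`, the ratio of the empirical mean of `min(W,c)·R` to the
empirical mean of `min(W,c)` converges almost surely to
`(∫ min(W,c)·R dμₚ) / (∫ min(W,c) dμₚ)`. -/
theorem ncis_asymptotic
    {Ω Ω' : Type*} [MeasurableSpace Ω] [MeasurableSpace Ω']
    (μₚ : Measure Ω) [IsProbabilityMeasure μₚ]
    (W : Ω → ℝ) (hW_meas : Measurable W) (hW_nonneg : ∀ ω, 0 ≤ W ω)
    (hW_int : ∫ ω, W ω ∂μₚ = 1)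
    (R : Ω → ℝ) (hR_meas : Measurable R) (C : ℝ) (hR_bdd : ∀ ω, |R ω| ≤ C)
    (c : ℝ) (hc : 0 < c) (hpos : 0 < ∫ ω, min (W ω) c ∂μₚ)
    (μ' : Measure Ω') [IsProbabilityMeasure μ']
    (Z : ℕ → Ω' → Ω) (hZ_meas : ∀ i, Measurable (Z i))
    (hZ_indep : ProbabilityTheory.iIndepFun Z μ')
    (hZ_law : ∀ i, Measure.map (Z i) μ' = μₚ) :
    ∀ᵐ ω' ∂μ', Tendsto
      (fun n : ℕ =>
        (∑ i ∈ Finset.range n, min (W (Z i ω')) c * R (Z i ω')) /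
        (∑ i ∈ Finset.range n, min (W (Z i ω')) c))
      atTop
      (nhds ((∫ ω, min (W ω) c * R ω ∂μₚ) / (∫ ω, min (W ω) c ∂μₚ))) :=
  ncis_asymptotic_general μₚ W hW_meas hW_int R hR_meas C hR_bdd c hpos μ' Z hZ_meas hZ_indep hZ_law
end

section
/- Let (Ω, 𝓕, μₚ) be a probability space, W : Ω → ℝ a nonnegative measurable function with ∫ W dμₚ = 1 and W bounded, μₜ = μₚ.withDensity W, and R : Ω → ℝ measurable and bounded. Let Z : ℕ → Ω' → Ω be an i.i.d. sequence on a probability space (Ω', μ') with common law μₚ. Then almost surely under μ', the normalised importance sampling ratio converges to the expected reward under the test policy: (∑_{i < n} W(Z_i) · R(Z_i)) / (∑_{i < n} W(Z_i)) → ∫ R dμₜ as n → ∞. (Consistency of the normalised importance sampling (NIS) estimator.) -/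
/-!
By the strong law of large numbers, applied to the i.i.d. sequences `W ∘ Z i` and
`(W * R) ∘ Z i`, the empirical means of the weights and of the weighted rewards converge
almost surely to `∫ W dμₚ = 1` and `∫ W R dμₚ = ∫ R dμₜ`. The NIS estimator is the quotient
of these two means, so it converges to the quotient of the limits.
-/

open MeasureTheory Filter Finset ProbabilityTheory

theorem ae_tendsto_average_comp_of_iIndepFun {Ω Ω' : Type*} [MeasurableSpace Ω]
    [MeasurableSpace Ω'] {μ : Measure Ω} {μ' : Measure Ω'} {Z : ℕ → Ω' → Ω}
    (hZ_meas : ∀ i, Measurable (Z i)) (hZ_indep : iIndepFun Z μ')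
    (hZ_law : ∀ i, μ'.map (Z i) = μ) {f : Ω → ℝ} (hf_meas : Measurable f)
    (hf_int : Integrable f μ) :
    ∀ᵐ ω' ∂μ', Tendsto (fun n : ℕ => (∑ i ∈ range n, f (Z i ω')) / n)
      atTop (nhds (∫ ω, f ω ∂μ)) := by
  have hident : ∀ i, IdentDistrib (f ∘ Z i) (f ∘ Z 0) μ' μ' := fun i =>
    IdentDistrib.comp ⟨(hZ_meas i).aemeasurable, (hZ_meas 0).aemeasurable, by
      rw [hZ_law i, hZ_law 0]⟩ hf_meas
  have hint : Integrable (f ∘ Z 0) μ' := (hZ_law 0 ▸ hf_int).comp_measurable (hZ_meas 0)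
  have hmean : ∫ ω', f (Z 0 ω') ∂μ' = ∫ ω, f ω ∂μ := by
    rw [← hZ_law 0, integral_map (hZ_meas 0).aemeasurable hf_meas.aestronglyMeasurable]
  simpa only [hmean, Function.comp_apply] using strong_law_ae_real (fun i => f ∘ Z i) hint
    (fun i j hij => (hZ_indep.indepFun hij).comp hf_meas hf_meas) hident

theorem integral_withDensity_ofReal_eq_integral_mul {Ω : Type*} [MeasurableSpace Ω]
    {μ : Measure Ω} {W : Ω → ℝ} (hW_meas : Measurable W) (hW_nonneg : ∀ ω, 0 ≤ W ω)
    (R : Ω → ℝ) :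
    ∫ ω, R ω ∂μ.withDensity (fun ω => ENNReal.ofReal (W ω)) = ∫ ω, W ω * R ω ∂μ := by
  rw [integral_withDensity_eq_integral_toReal_smul hW_meas.ennreal_ofReal
    (ae_of_all _ fun _ => ENNReal.ofReal_lt_top)]
  simp only [ENNReal.toReal_ofReal (hW_nonneg _), smul_eq_mul]

theorem tendsto_div_of_tendsto_average {a b : ℕ → ℝ} {x y : ℝ}
    (ha : Tendsto (fun n : ℕ => a n / n) atTop (nhds x))
    (hb : Tendsto (fun n : ℕ => b n / n) atTop (nhds y)) (hy : y ≠ 0) :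
    Tendsto (fun n => a n / b n) atTop (nhds (x / y)) := by
  refine (ha.div hb hy).congr' ?_
  filter_upwards [eventually_ne_atTop 0] with n hn
  exact div_div_div_cancel_right₀ (Nat.cast_ne_zero.mpr hn) _ _

theorem nis_consistent_general
    {Ω Ω' : Type*} [MeasurableSpace Ω] [MeasurableSpace Ω']
    (μₚ : Measure Ω)
    (W : Ω → ℝ) (hW_meas : Measurable W) (hW_nonneg : ∀ ω, 0 ≤ W ω)
    (hW_int : ∫ ω, W ω ∂μₚ = 1)
    (μₜ : Measure Ω) (hμₜ : μₜ = μₚ.withDensity (fun ω => ENNReal.ofReal (W ω)))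
    (R : Ω → ℝ) (hR_meas : Measurable R) (CR : ℝ) (hR_bdd : ∀ ω, |R ω| ≤ CR)
    (μ' : Measure Ω')
    (Z : ℕ → Ω' → Ω) (hZ_meas : ∀ i, Measurable (Z i))
    (hZ_indep : ProbabilityTheory.iIndepFun (m := fun _ => ‹MeasurableSpace Ω›) Z μ')
    (hZ_law : ∀ i, Measure.map (Z i) μ' = μₚ) :
    ∀ᵐ ω' ∂μ', Tendsto
      (fun n : ℕ =>
        (∑ i ∈ Finset.range n, W (Z i ω') * R (Z i ω')) /
        (∑ i ∈ Finset.range n, W (Z i ω')))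
      atTop (nhds (∫ ω, R ω ∂μₜ)) := by
  have hW_int_ne : ∫ ω, W ω ∂μₚ ≠ 0 := hW_int ▸ one_ne_zero
  have hW_integrable : Integrable W μₚ := .of_integral_ne_zero hW_int_ne
  have hWR_integrable : Integrable (fun ω => W ω * R ω) μₚ :=
    hW_integrable.mul_bdd hR_meas.aestronglyMeasurable (ae_of_all _ hR_bdd)
  have hlimit : ∫ ω, R ω ∂μₜ = (∫ ω, W ω * R ω ∂μₚ) / ∫ ω, W ω ∂μₚ := by
    rw [hμₜ, integral_withDensity_ofReal_eq_integral_mul hW_meas hW_nonneg, hW_int, div_one]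
  filter_upwards [ae_tendsto_average_comp_of_iIndepFun hZ_meas hZ_indep hZ_law
      (hW_meas.mul hR_meas) hWR_integrable,
    ae_tendsto_average_comp_of_iIndepFun hZ_meas hZ_indep hZ_law hW_meas hW_integrable]
    with ω' hWR hW
  rw [hlimit]
  exact tendsto_div_of_tendsto_average hWR hW hW_int_ne

/-- Consistency of the normalised importance sampling (NIS) estimator: along an i.i.d.
sequence with common law `μₚ`, the ratio of the empirical mean of `W·R` to the empirical
mean of `W` converges almost surely to the expected reward under the test policy
`μₜ = μₚ.withDensity W`. -/
theorem nis_consistent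
    {Ω Ω' : Type*} [MeasurableSpace Ω] [MeasurableSpace Ω']
    (μₚ : Measure Ω) [IsProbabilityMeasure μₚ]
    (W : Ω → ℝ) (hW_meas : Measurable W) (hW_nonneg : ∀ ω, 0 ≤ W ω)
    (hW_int : ∫ ω, W ω ∂μₚ = 1) (CW : ℝ) (hW_bdd : ∀ ω, W ω ≤ CW)
    (μₜ : Measure Ω) (hμₜ : μₜ = μₚ.withDensity (fun ω => ENNReal.ofReal (W ω)))
    (R : Ω → ℝ) (hR_meas : Measurable R) (CR : ℝ) (hR_bdd : ∀ ω, |R ω| ≤ CR)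
    (μ' : Measure Ω') [IsProbabilityMeasure μ']
    (Z : ℕ → Ω' → Ω) (hZ_meas : ∀ i, Measurable (Z i))
    (hZ_indep : ProbabilityTheory.iIndepFun (m := fun _ => ‹MeasurableSpace Ω›) Z μ')
    (hZ_law : ∀ i, Measure.map (Z i) μ' = μₚ) :
    ∀ᵐ ω' ∂μ', Tendsto
      (fun n : ℕ =>
        (∑ i ∈ Finset.range n, W (Z i ω') * R (Z i ω')) /
        (∑ i ∈ Finset.range n, W (Z i ω')))
      atTop (nhds (∫ ω, R ω ∂μₜ)) :=
  nis_consistent_general μₚ W hW_meas hW_nonneg hW_int μₜ hμₜ R hR_meas CR hR_bdd μ' Z hZ_meas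
    hZ_indep hZ_law
end

section
/- Let (Ω, 𝓕, μₚ) be a probability space and W : Ω → ℝ a nonnegative measurable function, integrable with respect to μₚ, with μₚ({ω : W ω > 0}) = 1. Then for every c > 1 there exists c̃ > 0 such that ∫ min(W, c̃) dμₚ > 0 and, for every ω ∈ Ω, min(W(ω), c̃) / (∫ min(W, c̃) dμₚ) ≤ c. (With max-capping, the capping level can always be lowered so that the renormalised capped weight never exceeds any prescribed bound c > 1.) -/
open MeasureTheory Filter Topology

/-- With max-capping, the capping level can always be lowered so that the renormalised
capped weight never exceeds any prescribed bound `c > 1`: there is `ctil > 0` with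
`∫ min(W, ctil) dμₚ > 0` and `min(W ω, ctil) / ∫ min(W, ctil) dμₚ ≤ c` for every `ω`. -/
theorem max_capping_bounded_effective_weight
    {Ω : Type*} [MeasurableSpace Ω] (μₚ : Measure Ω) [IsProbabilityMeasure μₚ]
    (W : Ω → ℝ) (hW_meas : Measurable W) (hW_nonneg : ∀ ω, 0 ≤ W ω)
    (hW_int : Integrable W μₚ) (hW_pos : μₚ {ω | 0 < W ω} = 1) :
    ∀ c : ℝ, 1 < c → ∃ ctil : ℝ, 0 < ctil ∧
      0 < ∫ ω, min (W ω) ctil ∂μₚ ∧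
      ∀ ω, min (W ω) ctil / (∫ ω, min (W ω) ctil ∂μₚ) ≤ c := by
  intro c hc
  have hc0 : (0 : ℝ) < c := lt_trans one_pos hc
  set s : ℕ → Set Ω := fun n => {ω | 1 / (n + 1 : ℝ) ≤ W ω} with hs
  have hmono : Monotone s := by
    intro m n hmn ω hω
    have hm : (0:ℝ) < (m:ℝ) + 1 := by positivity
    have hmn' : (m:ℝ) + 1 ≤ (n:ℝ) + 1 := by
      have : (m:ℝ) ≤ n := by exact_mod_cast hmn
      linarith
    exact le_trans (one_div_le_one_div_of_le hm hmn') hω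
  have hmeas : ∀ n, MeasurableSet (s n) := fun n =>
    measurableSet_le measurable_const hW_meas
  have hUnion : (⋃ n, s n) = {ω | 0 < W ω} := by
    ext ω
    simp only [Set.mem_iUnion, hs, Set.mem_setOf_eq]
    constructor
    · rintro ⟨n, hn⟩
      exact lt_of_lt_of_le (by positivity) hn
    · intro h
      obtain ⟨n, hn⟩ := exists_nat_one_div_lt h
      exact ⟨n, hn.le⟩
  have htend : Tendsto (fun n => μₚ (s n)) atTop (𝓝 (μₚ (⋃ n, s n))) :=
    tendsto_measure_iUnion_atTop hmono
  rw [hUnion, hW_pos] at htend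
  have hlt1 : ENNReal.ofReal (1 / c) < 1 := by
    rw [ENNReal.ofReal_lt_one]
    rw [div_lt_one hc0]
    exact hc
  have hev : ∀ᶠ n in atTop, ENNReal.ofReal (1 / c) < μₚ (s n) :=
    htend.eventually_const_lt hlt1
  obtain ⟨n, hn⟩ := hev.exists
  set t : ℝ := 1 / (n + 1 : ℝ) with ht_def
  have ht : 0 < t := by positivity
  have hminint : Integrable (fun ω => min (W ω) t) μₚ := by
    refine hW_int.mono (hW_meas.min measurable_const).aestronglyMeasurable
      (ae_of_all _ fun ω => ?_)
    rw [Real.norm_eq_abs, Real.norm_eq_abs,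
      abs_of_nonneg (le_min (hW_nonneg ω) ht.le), abs_of_nonneg (hW_nonneg ω)]
    exact min_le_left _ _
  have hind : Integrable ((s n).indicator fun _ => t) μₚ :=
    (integrable_const t).indicator (hmeas n)
  have hle : ∀ ω, (s n).indicator (fun _ => t) ω ≤ min (W ω) t := by
    intro ω
    by_cases hω : ω ∈ s n
    · rw [Set.indicator_of_mem hω]
      exact le_min hω le_rfl
    · rw [Set.indicator_of_notMem hω]
      exact le_min (hW_nonneg ω) ht.le
  have hμ : 1 / c ≤ (μₚ (s n)).toReal := by
    rw [← ENNReal.ofReal_le_iff_le_toReal (measure_ne_top μₚ _)]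
    exact hn.le
  have hI : (μₚ (s n)).toReal * t ≤ ∫ ω, min (W ω) t ∂μₚ := by
    have h1 : ∫ ω, (s n).indicator (fun _ => t) ω ∂μₚ = (μₚ (s n)).toReal * t := by
      rw [integral_indicator_const t (hmeas n)]
      simp [smul_eq_mul, measureReal_def]
    rw [← h1]
    exact integral_mono hind hminint hle
  have hIpos : 0 < ∫ ω, min (W ω) t ∂μₚ := by
    have : 0 < (1 / c) * t := by positivity
    calc (0:ℝ) < (1 / c) * t := this
      _ ≤ (μₚ (s n)).toReal * t := by gcongr
      _ ≤ _ := hI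
  refine ⟨t, ht, hIpos, fun ω => ?_⟩
  rw [div_le_iff₀ hIpos]
  calc min (W ω) t ≤ t := min_le_right _ _
    _ = c * ((1 / c) * t) := by field_simp
    _ ≤ c * ∫ ω, min (W ω) t ∂μₚ := by
        gcongr
        calc (1 / c) * t ≤ (μₚ (s n)).toReal * t := by gcongr
          _ ≤ _ := hI
end

section
/- Let p be a real number with 1/2 < p < (√5 − 1)/2. Consider the two-point probability space Ω = Bool with μₚ({a₀}) = p and μₚ({a₁}) = 1 − p, and importance weights W(a₀) = (1 − p)/p and W(a₁) = p/(1 − p) (the weights of the test policy πₜ with πₜ(a₀) = 1 − p, πₜ(a₁) = p relative to πₚ). Let c be any real number with 1 < c < min(p/(1 − p), (1 − p)/p²). Then for every c̃ > 0, letting D(c̃) = ∫ (indicator of {W ≤ c̃}) · W dμₚ be the zero-capped normaliser, either D(c̃) = 0 (the renormalised zero-capped weight is undefined), or there exists an action a ∈ Ω with W(a) ≤ c̃ and W(a) / D(c̃) > c. (With zero-capping, no choice of capping level c̃ makes the renormalised capped weight bounded by c.) -/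
open MeasureTheory

/-- Counterexample showing that with zero-capping no capping level makes the
renormalised capped weight bounded. On the two-point space `Bool` with
`μₚ({a₀}) = p`, `μₚ({a₁}) = 1 − p` (`a₀ = false`, `a₁ = true`), importance weights
`W(a₀) = (1−p)/p`, `W(a₁) = p/(1−p)`, and any `1 < c < min(p/(1−p), (1−p)/p²)` with
`1/2 < p < (√5 − 1)/2`: for every `c̃ > 0`, the zero-capped normaliser
`D(c̃) = ∫ 1_{W ≤ c̃}·W dμₚ` either vanishes, or some action `a` with `W(a) ≤ c̃`
satisfies `W(a)/D(c̃) > c`. -/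
theorem zero_capping_counterexample
    (p : ℝ) (hp_half : 1 / 2 < p) (hp_golden : p < (Real.sqrt 5 - 1) / 2)
    (μₚ : Measure Bool) [IsProbabilityMeasure μₚ]
    (hμ₀ : μₚ {false} = ENNReal.ofReal p)
    (hμ₁ : μₚ {true} = ENNReal.ofReal (1 - p))
    (W : Bool → ℝ)
    (hW₀ : W false = (1 - p) / p) (hW₁ : W true = p / (1 - p))
    (c : ℝ) (hc₁ : 1 < c) (hc₂ : c < min (p / (1 - p)) ((1 - p) / p ^ 2)) :
    ∀ ctil : ℝ, 0 < ctil →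
      (∫ a, Set.indicator {a | W a ≤ ctil} W a ∂μₚ) = 0 ∨
      ∃ a : Bool, W a ≤ ctil ∧
        W a / (∫ a, Set.indicator {a | W a ≤ ctil} W a ∂μₚ) > c := by
  intro ctil hctil
  have hp0 : 0 < p := by linarith
  have hp1 : p < 1 := by
    have h5 : Real.sqrt 5 < 3 := by
      have : (5:ℝ) < 3 ^ 2 := by norm_num
      nlinarith [Real.sq_sqrt (by norm_num : (5:ℝ) ≥ 0), Real.sqrt_nonneg 5]
    linarith
  have h1p : 0 < 1 - p := by linarith
  set g : Bool → ℝ := fun a => Set.indicator {a | W a ≤ ctil} W a with hg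
  have hint : (∫ a, g a ∂μₚ) = p * g false + (1 - p) * g true := by
    rw [MeasureTheory.integral_fintype _]
    simp [Measure.real, Fintype.sum_bool, hμ₀, hμ₁, ENNReal.toReal_ofReal hp0.le,
      ENNReal.toReal_ofReal h1p.le]
    ring
    exact Integrable.of_finite
  have hWf : W false = (1 - p) / p := hW₀
  have hWt : W true = p / (1 - p) := hW₁
  by_cases h1 : W true ≤ ctil
  · -- both included (since W false < W true)
    have hlt : W false ≤ ctil := by
      have : (1 - p) / p < p / (1 - p) := by
        rw [div_lt_div_iff₀ hp0 h1p]; nlinarith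
      rw [hWf]; rw [hWt] at h1; linarith
    have hgf : g false = W false := Set.indicator_of_mem (show false ∈ {a | W a ≤ ctil} from hlt) W
    have hgt : g true = W true := Set.indicator_of_mem (show true ∈ {a | W a ≤ ctil} from h1) W
    have hD : (∫ a, g a ∂μₚ) = 1 := by
      rw [hint, hgf, hgt, hWf, hWt]
      field_simp
      ring
    right
    exact ⟨true, h1, by rw [hD, div_one, hWt]; exact lt_of_lt_of_le hc₂ (min_le_left _ _)⟩
  · by_cases h2 : W false ≤ ctil
    · -- only false included
      have hgf : g false = W false := Set.indicator_of_mem (show false ∈ {a | W a ≤ ctil} from h2) W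
      have hgt : g true = 0 := Set.indicator_of_notMem (show true ∉ {a | W a ≤ ctil} from h1) W
      have hD : (∫ a, g a ∂μₚ) = 1 - p := by
        rw [hint, hgf, hgt, hWf]
        field_simp
        ring
      right
      refine ⟨false, h2, ?_⟩
      rw [hD, hWf]
      have : (1 - p) / p / (1 - p) = 1 / p := by field_simp
      rw [this]
      have hcle : c < (1 - p) / p ^ 2 := lt_of_lt_of_le hc₂ (min_le_right _ _)
      have : (1 - p) / p ^ 2 < 1 / p := by
        rw [div_lt_div_iff₀ (by positivity) hp0]; nlinarith
      linarith
    · -- neither included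
      left
      have hgf : g false = 0 := Set.indicator_of_notMem (show false ∉ {a | W a ≤ ctil} from h2) W
      have hgt : g true = 0 := Set.indicator_of_notMem (show true ∉ {a | W a ≤ ctil} from h1) W
      rw [hint, hgf, hgt]; ring
end
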